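/- For a symmetric set (union of elementary symmetric sets with common center a, with possibly different pathloss exponents ν_l ≥ 2 per subset), the common center a minimizes F(c) = Σ_l Σ_{k ∈ I_l} ‖c − x_k‖^{ν_l}. -/

import Mathlib

/-!
Group the sum by exponent. On a group with exponent `p` and common distance `r` from the
centroid `a`, the parallel-axis identity gives `∑ ‖c - x k‖² = m ‖c - a‖² + m r² ≥ m r²`,
and since `t ↦ t ^ (p / 2)` is convex for `p ≥ 2`, Jensen's inequality upgrades this to
`∑ ‖c - x k‖ ^ p ≥ m r ^ p = ∑ ‖a - x k‖ ^ p`.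
-/

open Finset

lemma Real.card_mul_rpow_le_sum_rpow {ι : Type*} {s : Finset ι} {f : ι → ℝ} {t q : ℝ}
    (hf : ∀ i ∈ s, 0 ≤ f i) (ht : 0 ≤ t) (hq : 1 ≤ q) (hmean : #s * t ≤ ∑ i ∈ s, f i) :
    #s * t ^ q ≤ ∑ i ∈ s, f i ^ q := by
  obtain rfl | hs := s.eq_empty_or_nonempty
  · simp
  have hcard : (0 : ℝ) < #s := by exact_mod_cast hs.card_pos
  have hw : ∑ _i ∈ s, (#s : ℝ)⁻¹ = 1 := by simp [hcard.ne']
  have jensen := Real.rpow_arith_mean_le_arith_mean_rpow s (fun _ => (#s : ℝ)⁻¹) f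
    (fun _ _ => by positivity) hw hf hq
  rw [← mul_sum, ← mul_sum] at jensen
  have ht_le : t ≤ (#s : ℝ)⁻¹ * ∑ i ∈ s, f i := by rwa [le_inv_mul_iff₀ hcard]
  rw [← le_inv_mul_iff₀ hcard]
  exact (Real.rpow_le_rpow ht ht_le (by linarith)).trans jensen

section InnerProductSpace

variable {E ι : Type*} [NormedAddCommGroup E] [InnerProductSpace ℝ E]
  {s : Finset ι} {x : ι → E} {a : E}

lemma sum_norm_sub_sq_eq_of_sum_eq_card_smul (hsum : ∑ k ∈ s, x k = #s • a) (c : E) :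
    ∑ k ∈ s, ‖c - x k‖ ^ 2 = #s * ‖c - a‖ ^ 2 + ∑ k ∈ s, ‖a - x k‖ ^ 2 := by
  have hcentred : ∑ k ∈ s, (a - x k) = 0 := by
    rw [sum_sub_distrib, hsum, sum_const, sub_self]
  have hsplit : ∀ k, ‖c - x k‖ ^ 2
      = ‖c - a‖ ^ 2 + 2 * inner ℝ (c - a) (a - x k) + ‖a - x k‖ ^ 2 := fun k => by
    rw [← norm_add_sq_real, sub_add_sub_cancel]
  simp only [hsplit, sum_add_distrib, ← mul_sum, ← inner_sum, hcentred, inner_zero_right,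
    mul_zero, add_zero, sum_const, nsmul_eq_mul]

theorem sum_norm_sub_rpow_le_of_sum_eq_card_smul {r p : ℝ} (hsum : ∑ k ∈ s, x k = #s • a)
    (hr : ∀ k ∈ s, ‖a - x k‖ = r) (hp : 2 ≤ p) (c : E) :
    ∑ k ∈ s, ‖a - x k‖ ^ p ≤ ∑ k ∈ s, ‖c - x k‖ ^ p := by
  have hsq_rpow : ∀ y : ℝ, 0 ≤ y → (y ^ 2) ^ (p / 2) = y ^ p := fun y hy => by
    rw [← Real.rpow_natCast_mul hy]
    norm_num [mul_div_cancel₀]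
  obtain rfl | hs := s.eq_empty_or_nonempty
  · simp
  obtain ⟨k₀, hk₀⟩ := hs
  have hr₀ : 0 ≤ r := hr k₀ hk₀ ▸ norm_nonneg _
  have hvariance : #s * r ^ 2 ≤ ∑ k ∈ s, ‖c - x k‖ ^ 2 := by
    rw [sum_norm_sub_sq_eq_of_sum_eq_card_smul hsum, sum_congr rfl fun k hk => by rw [hr k hk],
      sum_const, nsmul_eq_mul]
    nlinarith [sq_nonneg ‖c - a‖, (#s).cast_nonneg (α := ℝ)]
  calc ∑ k ∈ s, ‖a - x k‖ ^ p = #s * (r ^ 2) ^ (p / 2) := by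
        rw [sum_congr rfl fun k hk => by rw [hr k hk], sum_const, nsmul_eq_mul, hsq_rpow r hr₀]
    _ ≤ ∑ k ∈ s, (‖c - x k‖ ^ 2) ^ (p / 2) :=
        Real.card_mul_rpow_le_sum_rpow (fun _ _ => by positivity) (by positivity)
          (by linarith) hvariance
    _ = ∑ k ∈ s, ‖c - x k‖ ^ p := sum_congr rfl fun k _ => hsq_rpow _ (norm_nonneg _)

end InnerProductSpace

theorem stmt_13_general (n N L : ℕ) (x : Fin N → EuclideanSpace ℝ (Fin n))
    (grp : Fin N → Fin L)
    (a : EuclideanSpace ℝ (Fin n))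
    (hcen : ∀ l : Fin L,
      ((Finset.univ.filter fun k => grp k = l).card : ℝ)⁻¹ •
        ∑ k ∈ Finset.univ.filter fun k => grp k = l, x k = a)
    (d : Fin L → ℝ) (hd : ∀ k, ‖a - x k‖ = d (grp k))
    (ν : Fin L → ℝ) (hν : ∀ l, 2 ≤ ν l)
    (F : EuclideanSpace ℝ (Fin n) → ℝ)
    (hF : ∀ c, F c = ∑ k, ‖c - x k‖ ^ ν (grp k)) :
    ∀ c, F a ≤ F c := by
  intro c
  rw [hF, hF, ← sum_fiberwise univ grp, ← sum_fiberwise univ grp]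
  refine sum_le_sum fun l _ => ?_
  set s := univ.filter fun k => grp k = l
  have hgrp : ∀ k ∈ s, grp k = l := fun k hk => (mem_filter.mp hk).2
  have hsum : ∑ k ∈ s, x k = #s • a := by
    rcases eq_or_ne #s 0 with hs | hs
    · simp [card_eq_zero.mp hs]
    rw [← hcen l, ← Nat.cast_smul_eq_nsmul ℝ, smul_smul, mul_inv_cancel₀ (by exact_mod_cast hs),
      one_smul]
  have hexp : ∀ y : EuclideanSpace ℝ (Fin n),
      ∑ k ∈ s, ‖y - x k‖ ^ ν (grp k) = ∑ k ∈ s, ‖y - x k‖ ^ ν l :=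
    fun y => sum_congr rfl fun k hk => by rw [hgrp k hk]
  rw [hexp, hexp]
  exact sum_norm_sub_rpow_le_of_sum_eq_card_smul hsum
    (fun k hk => by rw [hd k, hgrp k hk]) (hν l) c

theorem stmt_13 (n N L : ℕ) (x : Fin N → EuclideanSpace ℝ (Fin n))
    (grp : Fin N → Fin L) (hsurj : ∀ l, ∃ k, grp k = l)
    (a : EuclideanSpace ℝ (Fin n))
    (hcen : ∀ l : Fin L,
      ((Finset.univ.filter fun k => grp k = l).card : ℝ)⁻¹ •
        ∑ k ∈ Finset.univ.filter fun k => grp k = l, x k = a)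
    (d : Fin L → ℝ) (hd : ∀ k, ‖a - x k‖ = d (grp k))
    (ν : Fin L → ℝ) (hν : ∀ l, 2 ≤ ν l)
    (F : EuclideanSpace ℝ (Fin n) → ℝ)
    (hF : ∀ c, F c = ∑ k, ‖c - x k‖ ^ ν (grp k)) :
    ∀ c, F a ≤ F c :=
  stmt_13_general n N L x grp a hcen d hd ν hν F hF
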